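/- arXiv:2007.12406 — 3 statements merged into one kernel-verified Lean document; each statement's English description precedes it below -/
import Mathlib

section
/- For a semi-symmetric connection with contorsion tensor 𝔗_X Y = ⟨U,Y⟩X − ⟨X,Y⟩U on (M,g, 𝔇̃, 𝔇), the mixed inner product ⟨𝔗, 𝔗^∧⟩_{|V} = Σ_{a,i} ε_a ε_i (⟨𝔗_{E_a} ℰ_i, 𝔗_{ℰ_i} E_a⟩ + ⟨𝔗_{ℰ_i} E_a, 𝔗_{E_a} ℰ_i⟩) vanishes, where {E_a} and {ℰ_i} are local orthonormal frames of 𝔇̃ and 𝔇. -/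
/-- For a semi-symmetric connection with contorsion
`𝔗_X Y = ⟨U,Y⟩X − ⟨X,Y⟩U`, the mixed inner product
`⟨𝔗, 𝔗^∧⟩_{|V} = Σ_{a,i} ε_a ε_i (⟨𝔗_{E_a}ℰ_i, 𝔗_{ℰ_i}E_a⟩ + ⟨𝔗_{ℰ_i}E_a, 𝔗_{E_a}ℰ_i⟩)`
vanishes. -/
theorem semisymmetric_mixed_product_vanishes
    {V : Type*} [AddCommGroup V] [Module ℝ V]
    (g : V →ₗ[ℝ] V →ₗ[ℝ] ℝ)
    (hgsymm : ∀ X Y : V, g X Y = g Y X)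
    {n p : ℕ}
    (E : Fin n → V) (Ee : Fin p → V)
    (εn : Fin n → ℝ) (εp : Fin p → ℝ)
    (hεn : ∀ a, εn a = 1 ∨ εn a = -1) (hεp : ∀ i, εp i = 1 ∨ εp i = -1)
    (hon : ∀ a b, g (E a) (E b) = if a = b then εn a else 0)
    (hop : ∀ i j, g (Ee i) (Ee j) = if i = j then εp i else 0)
    (hmix : ∀ a i, g (E a) (Ee i) = 0)
    (U : V)
    (T : V → V → V)
    (hT : ∀ X Y : V, T X Y = g U Y • X - g X Y • U) :
    (∑ a, ∑ i, (εn a * εp i) *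
      (g (T (E a) (Ee i)) (T (Ee i) (E a)) + g (T (Ee i) (E a)) (T (E a) (Ee i)))) = 0 := by
  have key : ∀ a i, g (T (E a) (Ee i)) (T (Ee i) (E a)) = 0 := by
    intro a i
    have h1 : T (E a) (Ee i) = g U (Ee i) • E a := by
      rw [hT, hmix, zero_smul, sub_zero]
    have h2 : T (Ee i) (E a) = g U (E a) • Ee i := by
      rw [hT, hgsymm (Ee i) (E a), hmix, zero_smul, sub_zero]
    simp [h1, h2, hmix]
  have key2 : ∀ a i, g (T (Ee i) (E a)) (T (E a) (Ee i)) = 0 := by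
    intro a i
    rw [hgsymm, key]
  refine Finset.sum_eq_zero fun a _ => Finset.sum_eq_zero fun i _ => ?_
  rw [key, key2]
  ring
end

section
/- Let (M,g) be pseudo-Riemannian with orthogonal non-degenerate complementary distributions 𝔇̃ and 𝔇, with second fundamental forms h, h̃, mean curvature vectors H, H̃, and integrability tensors T, T̃. Then the mixed scalar curvature of the Levi-Civita connection satisfies S_mix = ⟨H,H⟩ + ⟨H̃,H̃⟩ − ⟨h,h⟩ − ⟨h̃,h̃⟩ + ⟨T,T⟩ + ⟨T̃,T̃⟩ + div(H + H̃). -/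
set_option linter.unusedSectionVars false

section helpers

variable {F V : Type*} [CommRing F] [Algebra ℝ F]
  [AddCommGroup V] [Module F V] [Module ℝ V] [IsScalarTower ℝ F V]

lemma rsmul_eq_algebraMap_smul (r : ℝ) (v : V) : r • v = (algebraMap ℝ F r) • v := by
  rw [Algebra.algebraMap_eq_smul_one, smul_assoc, one_smul]

lemma g_rsmul_left (g : V →ₗ[F] V →ₗ[F] F) (r : ℝ) (u w : V) :
    g (r • u) w = r • g u w := by
  rw [rsmul_eq_algebraMap_smul (F := F), map_smul, LinearMap.smul_apply, smul_eq_mul,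
    ← Algebra.smul_def]

lemma g_rsmul_right (g : V →ₗ[F] V →ₗ[F] F) (r : ℝ) (u w : V) :
    g u (r • w) = r • g u w := by
  rw [rsmul_eq_algebraMap_smul (F := F), map_smul, smul_eq_mul, ← Algebra.smul_def]

lemma g_fsmul_left (g : V →ₗ[F] V →ₗ[F] F) (f : F) (u w : V) :
    g (f • u) w = f * g u w := by rw [map_smul, LinearMap.smul_apply, smul_eq_mul]

lemma g_fsmul_right (g : V →ₗ[F] V →ₗ[F] F) (f : F) (u w : V) :
    g u (f • w) = f * g u w := by rw [map_smul, smul_eq_mul]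

lemma g_add_left (g : V →ₗ[F] V →ₗ[F] F) (u v w : V) :
    g (u + v) w = g u w + g v w := by rw [map_add, LinearMap.add_apply]

lemma g_sub_left (g : V →ₗ[F] V →ₗ[F] F) (u v w : V) :
    g (u - v) w = g u w - g v w := by rw [map_sub, LinearMap.sub_apply]

lemma g_sum_left (g : V →ₗ[F] V →ₗ[F] F) {ι : Type*} (s : Finset ι) (v : ι → V) (w : V) :
    g (∑ x ∈ s, v x) w = ∑ x ∈ s, g (v x) w := by
  rw [map_sum, LinearMap.coe_sum, Finset.sum_apply]

lemma half_smul_add {M : Type*} [AddCommMonoid M] [Module ℝ M] (x : M) :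
    (1/2 : ℝ) • (x + x) = x := by
  rw [smul_add, ← add_smul]; norm_num

lemma quarter_diff {F : Type*} [CommRing F] [Algebra ℝ F] (x y : F) :
    ((1/2:ℝ) • (x - y)) * ((1/2:ℝ) • (x - y)) - ((1/2:ℝ) • (x + y)) * ((1/2:ℝ) • (x + y))
      = -(x * y) := by
  rw [smul_mul_assoc, smul_mul_assoc, mul_smul_comm, mul_smul_comm, smul_smul, smul_smul,
    ← smul_sub]
  have h : (x-y)*(x-y) - (x+y)*(x+y) = -((x*y) + (x*y) + (x*y) + (x*y)) := by ring
  rw [h, smul_neg, neg_inj, smul_add, smul_add, smul_add, ← add_smul, ← add_smul, ← add_smul]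
  norm_num

lemma skew_sum_zero {F : Type*} [AddCommGroup F] [Module ℝ F] {n m : ℕ}
    (f : Fin n → Fin m → Fin n → F) (hf : ∀ a i b, f a i b = - f b i a) :
    (∑ a, ∑ i, ∑ b, f a i b) = 0 := by
  have key : (∑ a, ∑ i, ∑ b, f a i b) = - ∑ a, ∑ i, ∑ b, f a i b := by
    calc (∑ a, ∑ i, ∑ b, f a i b) = ∑ a, ∑ b, ∑ i, f a i b :=
          Finset.sum_congr rfl fun a _ => Finset.sum_comm
    _ = ∑ b, ∑ a, ∑ i, f a i b := Finset.sum_comm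
    _ = ∑ b, ∑ a, ∑ i, -(f b i a) := by
          refine Finset.sum_congr rfl fun b _ => Finset.sum_congr rfl fun a _ =>
            Finset.sum_congr rfl fun i _ => ?_
          exact hf a i b
    _ = - ∑ b, ∑ a, ∑ i, f b i a := by
          simp only [Finset.sum_neg_distrib]
    _ = - ∑ a, ∑ b, ∑ i, f a i b := rfl
    _ = - ∑ a, ∑ i, ∑ b, f a i b := by
          exact congrArg Neg.neg (Finset.sum_congr rfl fun a _ => Finset.sum_comm)
  have h2 : (∑ a, ∑ i, ∑ b, f a i b) + (∑ a, ∑ i, ∑ b, f a i b) = 0 := by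
    nth_rewrite 1 [key]; rw [neg_add_cancel]
  calc (∑ a, ∑ i, ∑ b, f a i b) = (1:ℝ) • (∑ a, ∑ i, ∑ b, f a i b) := (one_smul ℝ _).symm
  _ = (1/2:ℝ) • ((∑ a, ∑ i, ∑ b, f a i b) + (∑ a, ∑ i, ∑ b, f a i b)) := by
        rw [smul_add, ← add_smul]; norm_num
  _ = 0 := by rw [h2, smul_zero]


lemma skew_sum_zero₂ {F : Type*} [AddCommGroup F] [Module ℝ F] {m : ℕ}
    (f : Fin m → Fin m → F) (hf : ∀ i j, f i j = - f j i) :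
    (∑ i, ∑ j, f i j) = 0 := by
  have key : (∑ i, ∑ j, f i j) = - ∑ i, ∑ j, f i j := by
    calc (∑ i, ∑ j, f i j) = ∑ j, ∑ i, f i j := Finset.sum_comm
    _ = ∑ j, ∑ i, -(f j i) := by
          refine Finset.sum_congr rfl fun j _ => Finset.sum_congr rfl fun i _ => ?_
          exact hf i j
    _ = - ∑ j, ∑ i, f j i := by simp only [Finset.sum_neg_distrib]
    _ = - ∑ i, ∑ j, f i j := rfl
  have h2 : (∑ i, ∑ j, f i j) + (∑ i, ∑ j, f i j) = 0 := by
    nth_rewrite 1 [key]; rw [neg_add_cancel]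
  calc (∑ i, ∑ j, f i j) = (1:ℝ) • (∑ i, ∑ j, f i j) := (one_smul ℝ _).symm
  _ = (1/2:ℝ) • ((∑ i, ∑ j, f i j) + (∑ i, ∑ j, f i j)) := by
        rw [smul_add, ← add_smul]; norm_num
  _ = 0 := by rw [h2, smul_zero]

end helpers

set_option maxHeartbeats 2000000 in
/-- For orthogonal non-degenerate complementary distributions `𝔇̃`, `𝔇`
on a pseudo-Riemannian manifold `(M,g)`, the mixed scalar curvature of the Levi-Civita
connection satisfies
`S_mix = ⟨H,H⟩ + ⟨H̃,H̃⟩ − ⟨h,h⟩ − ⟨h̃,h̃⟩ + ⟨T,T⟩ + ⟨T̃,T̃⟩ + div(H + H̃)`.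
Here `F` is the ring of smooth functions, `V` the module of vector fields,
`E, Ee` adapted orthonormal frames of `𝔇̃, 𝔇`;  `hf, Tf` (resp. `htf, Ttf`) are the values
of the second fundamental form and integrability tensor of `𝔇̃` (resp. `𝔇`) on the frames,
`H, Ht` the mean curvature vectors, and the divergence is computed in the frames. -/
theorem mixed_scalar_curvature_formula
    {F V : Type*} [CommRing F] [Algebra ℝ F]
    [AddCommGroup V] [Module F V] [Module ℝ V] [IsScalarTower ℝ F V]
    (g : V →ₗ[F] V →ₗ[F] F)
    (hgsymm : ∀ X Y : V, g X Y = g Y X)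
    (act : V → F →ₗ[ℝ] F)
    (hact_mul : ∀ (X : V) (f₁ f₂ : F), act X (f₁ * f₂) = act X f₁ * f₂ + f₁ * act X f₂)
    (br : V → V → V)
    (hbr_act : ∀ (X Y : V) (f : F), act (br X Y) f = act X (act Y f) - act Y (act X f))
    (D : V → V → V)                      -- the Levi-Civita connection
    (hD_add₁ : ∀ X Y Z : V, D (X + Y) Z = D X Z + D Y Z)
    (hD_add₂ : ∀ X Y Z : V, D X (Y + Z) = D X Y + D X Z)
    (hD_fun₁ : ∀ (f : F) (X Y : V), D (f • X) Y = f • D X Y)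
    (hD_fun₂ : ∀ (f : F) (X Y : V), D X (f • Y) = act X f • Y + f • D X Y)
    (hD_metric : ∀ X Y Z : V, act X (g Y Z) = g (D X Y) Z + g Y (D X Z))
    (hD_torsionfree : ∀ X Y : V, D X Y - D Y X = br X Y)
    {n p : ℕ}
    (E : Fin n → V) (Ee : Fin p → V)
    (εn : Fin n → ℝ) (εp : Fin p → ℝ)
    (hεn : ∀ a, εn a = 1 ∨ εn a = -1) (hεp : ∀ i, εp i = 1 ∨ εp i = -1)
    (hon : ∀ a b, g (E a) (E b) = algebraMap ℝ F (if a = b then εn a else 0))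
    (hop : ∀ i j, g (Ee i) (Ee j) = algebraMap ℝ F (if i = j then εp i else 0))
    (hmix : ∀ a i, g (E a) (Ee i) = 0)
    (hcomplete : ∀ X : V,
      (∑ a, εn a • (g X (E a)) • E a) + (∑ i, εp i • (g X (Ee i)) • Ee i) = X)
    -- second fundamental forms and integrability tensors on the frames
    (hf : Fin n → Fin n → V)
    (hhf : ∀ a b, hf a b
      = ∑ i, εp i • (g ((1/2 : ℝ) • (D (E a) (E b) + D (E b) (E a))) (Ee i)) • Ee i)
    (Tf : Fin n → Fin n → V)
    (hTf : ∀ a b, Tf a b = ∑ i, εp i • (g ((1/2 : ℝ) • br (E a) (E b)) (Ee i)) • Ee i)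
    (htf : Fin p → Fin p → V)
    (hhtf : ∀ i j, htf i j
      = ∑ a, εn a • (g ((1/2 : ℝ) • (D (Ee i) (Ee j) + D (Ee j) (Ee i))) (E a)) • E a)
    (Ttf : Fin p → Fin p → V)
    (hTtf : ∀ i j, Ttf i j = ∑ a, εn a • (g ((1/2 : ℝ) • br (Ee i) (Ee j)) (E a)) • E a)
    -- mean curvature vector fields
    (H Ht : V)
    (hH : H = ∑ a, εn a • hf a a)
    (hHt : Ht = ∑ i, εp i • htf i i)
    -- the mixed scalar curvature  S_mix = Σ_{a,i} ε_a ε_i ⟨R_{E_a, ℰ_i} E_a, ℰ_i⟩,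
    -- with R_{X,Y} = [∇_Y, ∇_X] + ∇_{[X,Y]}
    (Smix : F)
    (hSmix : Smix = ∑ a, ∑ i, (εn a * εp i) •
      g (D (Ee i) (D (E a) (E a)) - D (E a) (D (Ee i) (E a)) + D (br (E a) (Ee i)) (E a))
        (Ee i)) :
    Smix
      = g H H + g Ht Ht
        - (∑ a, ∑ b, (εn a * εn b) • g (hf a b) (hf a b))
        - (∑ i, ∑ j, (εp i * εp j) • g (htf i j) (htf i j))
        + (∑ a, ∑ b, (εn a * εn b) • g (Tf a b) (Tf a b))
        + (∑ i, ∑ j, (εp i * εp j) • g (Ttf i j) (Ttf i j))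
        + ((∑ i, εp i • g (D (Ee i) (H + Ht)) (Ee i))
            + (∑ a, εn a • g (D (E a) (H + Ht)) (E a))) := by
  classical
  have hε2n : ∀ a, εn a * εn a = 1 := fun a => by rcases hεn a with h | h <;> rw [h] <;> norm_num
  have hε2p : ∀ i, εp i * εp i = 1 := fun i => by rcases hεp i with h | h <;> rw [h] <;> norm_num
  have act1 : ∀ X : V, act X (1:F) = 0 := by
    intro X
    have h := hact_mul X 1 1
    simp only [one_mul, mul_one] at h
    exact (left_eq_add.mp h)
  have actC : ∀ (X : V) (r : ℝ), act X ((algebraMap ℝ F) r) = 0 := by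
    intro X r
    rw [Algebra.algebraMap_eq_smul_one, map_smul, act1, smul_zero]
  have hmix' : ∀ (i : Fin p) (a : Fin n), g (Ee i) (E a) = 0 := fun i a => by
    rw [hgsymm, hmix]
  -- skew-symmetry of ∇-derivatives of the frames
  have sEE : ∀ (X : V) (a b : Fin n), g (D X (E a)) (E b) = - g (D X (E b)) (E a) := by
    intro X a b
    have h := hD_metric X (E a) (E b)
    rw [hon, actC] at h
    have h2 := hgsymm (E a) (D X (E b))
    linear_combination -h - h2
  have sFF : ∀ (X : V) (i j : Fin p), g (D X (Ee i)) (Ee j) = - g (D X (Ee j)) (Ee i) := by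
    intro X i j
    have h := hD_metric X (Ee i) (Ee j)
    rw [hop, actC] at h
    have h2 := hgsymm (Ee i) (D X (Ee j))
    linear_combination -h - h2
  have sEF : ∀ (X : V) (a : Fin n) (i : Fin p),
      g (D X (E a)) (Ee i) = - g (D X (Ee i)) (E a) := by
    intro X a i
    have h := hD_metric X (E a) (Ee i)
    rw [hmix, map_zero] at h
    have h2 := hgsymm (E a) (D X (Ee i))
    linear_combination -h - h2
  -- Parseval-type expansion
  have parseval : ∀ X Y : V, g X Y
      = (∑ b, εn b • (g X (E b) * g Y (E b))) + ∑ j, εp j • (g X (Ee j) * g Y (Ee j)) := by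
    intro X Y
    conv_lhs => rw [← hcomplete Y]
    rw [map_add, map_sum, map_sum]
    congr 1
    · refine Finset.sum_congr rfl fun b _ => ?_
      rw [g_rsmul_right, g_fsmul_right, mul_comm]
    · refine Finset.sum_congr rfl fun j _ => ?_
      rw [g_rsmul_right, g_fsmul_right, mul_comm]
  have evalF : ∀ (c : Fin p → F) (i : Fin p), (∑ j, εp j • (c j * g (Ee j) (Ee i))) = c i := by
    intro c i
    rw [Finset.sum_eq_single i]
    · rw [hop, if_pos rfl, mul_comm, ← Algebra.smul_def, smul_smul, hε2p, one_smul]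
    · intro j _ hji
      rw [hop, if_neg hji, map_zero, mul_zero, smul_zero]
    · intro h; exact absurd (Finset.mem_univ i) h
  have evalE : ∀ (c : Fin n → F) (a : Fin n), (∑ b, εn b • (c b * g (E b) (E a))) = c a := by
    intro c a
    rw [Finset.sum_eq_single a]
    · rw [hon, if_pos rfl, mul_comm, ← Algebra.smul_def, smul_smul, hε2n, one_smul]
    · intro b _ hba
      rw [hon, if_neg hba, map_zero, mul_zero, smul_zero]
    · intro h; exact absurd (Finset.mem_univ a) h
  have coeffF : ∀ (c : Fin p → F) (j : Fin p), g (∑ i, εp i • c i • Ee i) (Ee j) = c j := by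
    intro c j
    rw [g_sum_left]
    have e : ∀ i, g (εp i • c i • Ee i) (Ee j) = εp i • (c i * g (Ee i) (Ee j)) := fun i => by
      rw [g_rsmul_left, g_fsmul_left]
    simp only [e]
    exact evalF c j
  have coeffF0 : ∀ (c : Fin p → F) (b : Fin n), g (∑ i, εp i • c i • Ee i) (E b) = 0 := by
    intro c b
    rw [g_sum_left]
    refine Finset.sum_eq_zero fun i _ => ?_
    rw [g_rsmul_left, g_fsmul_left, hmix', mul_zero, smul_zero]
  have coeffE : ∀ (c : Fin n → F) (b : Fin n), g (∑ a, εn a • c a • E a) (E b) = c b := by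
    intro c b
    rw [g_sum_left]
    have e : ∀ a, g (εn a • c a • E a) (E b) = εn a • (c a * g (E a) (E b)) := fun a => by
      rw [g_rsmul_left, g_fsmul_left]
    simp only [e]
    exact evalE c b
  have coeffE0 : ∀ (c : Fin n → F) (j : Fin p), g (∑ a, εn a • c a • E a) (Ee j) = 0 := by
    intro c j
    rw [g_sum_left]
    refine Finset.sum_eq_zero fun a _ => ?_
    rw [g_rsmul_left, g_fsmul_left, hmix, mul_zero, smul_zero]
  have innerF : ∀ (c d : Fin p → F),
      g (∑ i, εp i • c i • Ee i) (∑ j, εp j • d j • Ee j) = ∑ i, εp i • (c i * d i) := by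
    intro c d
    rw [g_sum_left]
    refine Finset.sum_congr rfl fun i _ => ?_
    rw [g_rsmul_left, g_fsmul_left, hgsymm (Ee i) (∑ j, εp j • d j • Ee j), coeffF]
  have innerE : ∀ (c d : Fin n → F),
      g (∑ a, εn a • c a • E a) (∑ b, εn b • d b • E b) = ∑ a, εn a • (c a * d a) := by
    intro c d
    rw [g_sum_left]
    refine Finset.sum_congr rfl fun a _ => ?_
    rw [g_rsmul_left, g_fsmul_left, hgsymm (E a) (∑ b, εn b • d b • E b), coeffE]
  -- structural facts about D
  have hD0₁ : ∀ Z : V, D 0 Z = 0 := by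
    intro Z
    have h := hD_add₁ 0 0 Z
    rw [add_zero] at h
    exact (left_eq_add.mp h)
  have hDr₁ : ∀ (r : ℝ) (X Z : V), D (r • X) Z = r • D X Z := by
    intro r X Z
    rw [rsmul_eq_algebraMap_smul (F := F), hD_fun₁, ← rsmul_eq_algebraMap_smul]
  have hDr₂ : ∀ (r : ℝ) (X Z : V), D X (r • Z) = r • D X Z := by
    intro r X Z
    rw [rsmul_eq_algebraMap_smul (F := F), hD_fun₂, actC, zero_smul, zero_add,
      ← rsmul_eq_algebraMap_smul]
  have hDsum₁ : ∀ {ι : Type} (s : Finset ι) (v : ι → V) (Z : V),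
      D (∑ x ∈ s, v x) Z = ∑ x ∈ s, D (v x) Z := by
    intro ι s v Z
    induction s using Finset.cons_induction with
    | empty => simpa using hD0₁ Z
    | cons a s ha ih => rw [Finset.sum_cons, Finset.sum_cons, hD_add₁, ih]
  have hD0₂ : ∀ X : V, D X 0 = 0 := by
    intro X
    have h := hD_add₂ X 0 0
    rw [add_zero] at h
    exact (left_eq_add.mp h)
  have hDsum₂ : ∀ {ι : Type} (X : V) (s : Finset ι) (v : ι → V),
      D X (∑ x ∈ s, v x) = ∑ x ∈ s, D X (v x) := by
    intro ι X s v
    induction s using Finset.cons_induction with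
    | empty => simpa using hD0₂ X
    | cons a s ha ih => rw [Finset.sum_cons, Finset.sum_cons, hD_add₂, ih]
  have hDsub₁ : ∀ X Y Z : V, D (X - Y) Z = D X Z - D Y Z := by
    intro X Y Z
    have h := hD_add₁ (X - Y) Y Z
    rw [sub_add_cancel] at h
    exact eq_sub_of_add_eq h.symm
  have Dfirst : ∀ W Z u : V, g (D W Z) u
      = (∑ b, εn b • (g W (E b) * g (D (E b) Z) u))
        + ∑ j, εp j • (g W (Ee j) * g (D (Ee j) Z) u) := by
    intro W Z u
    conv_lhs => rw [← hcomplete W]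
    rw [hD_add₁, g_add_left, hDsum₁, hDsum₁, g_sum_left, g_sum_left]
    congr 1
    · refine Finset.sum_congr rfl fun b _ => ?_
      rw [hDr₁, hD_fun₁, g_rsmul_left, g_fsmul_left]
    · refine Finset.sum_congr rfl fun j _ => ?_
      rw [hDr₁, hD_fun₁, g_rsmul_left, g_fsmul_left]
  -- the pointwise curvature computation
  have key : ∀ (a : Fin n) (i : Fin p),
      g (D (Ee i) (D (E a) (E a)) - D (E a) (D (Ee i) (E a)) + D (br (E a) (Ee i)) (E a)) (Ee i)
      = act (Ee i) (g (D (E a) (E a)) (Ee i)) + act (E a) (g (D (Ee i) (Ee i)) (E a))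
        - (∑ b, εn b • (g (D (E a) (E a)) (E b) * g (D (Ee i) (Ee i)) (E b)))
        - (∑ b, εn b • (g (D (Ee i) (E a)) (E b) * g (D (E a) (E b)) (Ee i)))
        - (∑ b, εn b • (g (D (Ee i) (E a)) (E b) * g (D (E b) (E a)) (Ee i)))
        - (∑ b, εn b • (g (D (E a) (E b)) (Ee i) * g (D (E b) (E a)) (Ee i)))
        - (∑ j, εp j • (g (D (E a) (E a)) (Ee j) * g (D (Ee i) (Ee i)) (Ee j)))
        - (∑ j, εp j • (g (D (E a) (Ee i)) (Ee j) * g (D (Ee i) (Ee j)) (E a)))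
        - (∑ j, εp j • (g (D (E a) (Ee i)) (Ee j) * g (D (Ee j) (Ee i)) (E a)))
        - (∑ j, εp j • (g (D (Ee i) (Ee j)) (E a) * g (D (Ee j) (Ee i)) (E a))) := by
    intro a i
    rw [g_add_left, g_sub_left]
    have t1 : g (D (Ee i) (D (E a) (E a))) (Ee i)
        = act (Ee i) (g (D (E a) (E a)) (Ee i))
          - ((∑ b, εn b • (g (D (E a) (E a)) (E b) * g (D (Ee i) (Ee i)) (E b)))
            + ∑ j, εp j • (g (D (E a) (E a)) (Ee j) * g (D (Ee i) (Ee i)) (Ee j))) := by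
      have h := hD_metric (Ee i) (D (E a) (E a)) (Ee i)
      have h2 := parseval (D (E a) (E a)) (D (Ee i) (Ee i))
      linear_combination -h - h2
    have t2 : g (D (E a) (D (Ee i) (E a))) (Ee i)
        = - act (E a) (g (D (Ee i) (Ee i)) (E a))
          + ((∑ b, εn b • (g (D (Ee i) (E a)) (E b) * g (D (E a) (E b)) (Ee i)))
            + ∑ j, εp j • (g (D (E a) (Ee i)) (Ee j) * g (D (Ee i) (Ee j)) (E a))) := by
      have h := hD_metric (E a) (D (Ee i) (E a)) (Ee i)
      have hact : act (E a) (g (D (Ee i) (E a)) (Ee i))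
          = - act (E a) (g (D (Ee i) (Ee i)) (E a)) := by
        rw [sEF (Ee i) a i, map_neg]
      have h2 := parseval (D (Ee i) (E a)) (D (E a) (Ee i))
      have hb : (∑ b, εn b • (g (D (Ee i) (E a)) (E b) * g (D (E a) (Ee i)) (E b)))
          = - ∑ b, εn b • (g (D (Ee i) (E a)) (E b) * g (D (E a) (E b)) (Ee i)) := by
        have e : ∀ b : Fin n, g (D (Ee i) (E a)) (E b) * g (D (E a) (Ee i)) (E b)
            = -(g (D (Ee i) (E a)) (E b) * g (D (E a) (E b)) (Ee i)) := fun b => by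
          rw [sEF (E a) b i]; ring
        simp only [e, smul_neg, Finset.sum_neg_distrib]
      have hj : (∑ j, εp j • (g (D (Ee i) (E a)) (Ee j) * g (D (E a) (Ee i)) (Ee j)))
          = - ∑ j, εp j • (g (D (E a) (Ee i)) (Ee j) * g (D (Ee i) (Ee j)) (E a)) := by
        have e : ∀ j : Fin p, g (D (Ee i) (E a)) (Ee j) * g (D (E a) (Ee i)) (Ee j)
            = -(g (D (E a) (Ee i)) (Ee j) * g (D (Ee i) (Ee j)) (E a)) := fun j => by
          rw [sEF (Ee i) a j]; ring
        simp only [e, smul_neg, Finset.sum_neg_distrib]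
      linear_combination -h + hact - h2 - hb - hj
    have t3 : g (D (br (E a) (Ee i)) (E a)) (Ee i)
        = - (∑ b, εn b • (g (D (E a) (E b)) (Ee i) * g (D (E b) (E a)) (Ee i)))
          - (∑ b, εn b • (g (D (Ee i) (E a)) (E b) * g (D (E b) (E a)) (Ee i)))
          - (∑ j, εp j • (g (D (E a) (Ee i)) (Ee j) * g (D (Ee j) (Ee i)) (E a)))
          - (∑ j, εp j • (g (D (Ee i) (Ee j)) (E a) * g (D (Ee j) (Ee i)) (E a))) := by
      rw [← hD_torsionfree, hDsub₁, g_sub_left,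
        Dfirst (D (E a) (Ee i)) (E a) (Ee i), Dfirst (D (Ee i) (E a)) (E a) (Ee i)]
      have e1 : ∀ b : Fin n, g (D (E a) (Ee i)) (E b) * g (D (E b) (E a)) (Ee i)
          = -(g (D (E a) (E b)) (Ee i) * g (D (E b) (E a)) (Ee i)) := fun b => by
        rw [sEF (E a) b i]; ring
      have e2 : ∀ j : Fin p, g (D (E a) (Ee i)) (Ee j) * g (D (Ee j) (E a)) (Ee i)
          = -(g (D (E a) (Ee i)) (Ee j) * g (D (Ee j) (Ee i)) (E a)) := fun j => by
        rw [sEF (Ee j) a i]; ring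
      have e3 : ∀ j : Fin p, g (D (Ee i) (E a)) (Ee j) * g (D (Ee j) (E a)) (Ee i)
          = g (D (Ee i) (Ee j)) (E a) * g (D (Ee j) (Ee i)) (E a) := fun j => by
        rw [sEF (Ee i) a j, sEF (Ee j) a i]; ring
      simp only [e1, e2, e3, smul_neg, Finset.sum_neg_distrib]
      ring
    rw [t1, t2, t3]
    ring
  -- clean form of the mean curvature vectors
  have hH2 : H = ∑ a, εn a • ∑ j, εp j • (g (D (E a) (E a)) (Ee j)) • Ee j := by
    rw [hH]
    refine Finset.sum_congr rfl fun a _ => ?_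
    rw [hhf a a]
    simp only [half_smul_add]
  have hHt2 : Ht = ∑ i, εp i • ∑ b, εn b • (g (D (Ee i) (Ee i)) (E b)) • E b := by
    rw [hHt]
    refine Finset.sum_congr rfl fun i _ => ?_
    rw [hhtf i i]
    simp only [half_smul_add]
  have gHf : ∀ j, g H (Ee j) = ∑ a, εn a • (g (D (E a) (E a)) (Ee j)) := by
    intro j
    rw [hH2, g_sum_left]
    refine Finset.sum_congr rfl fun a _ => ?_
    rw [g_rsmul_left, coeffF]
  have gHE : ∀ b, g H (E b) = 0 := by
    intro b
    rw [hH2, g_sum_left]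
    refine Finset.sum_eq_zero fun a _ => ?_
    rw [g_rsmul_left, coeffF0, smul_zero]
  have gHtE : ∀ b, g Ht (E b) = ∑ i, εp i • (g (D (Ee i) (Ee i)) (E b)) := by
    intro b
    rw [hHt2, g_sum_left]
    refine Finset.sum_congr rfl fun i _ => ?_
    rw [g_rsmul_left, coeffE]
  have gHtf : ∀ j, g Ht (Ee j) = 0 := by
    intro j
    rw [hHt2, g_sum_left]
    refine Finset.sum_eq_zero fun i _ => ?_
    rw [g_rsmul_left, coeffE0, smul_zero]
  have hgHH : g H H = ∑ a, ∑ i, ∑ b, (εn a * εp i * εn b) •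
      (g (D (E a) (E a)) (Ee i) * g (D (E b) (E b)) (Ee i)) := by
    rw [parseval H H]
    simp only [gHE, gHf, zero_mul, smul_zero, Finset.sum_const_zero, zero_add]
    calc (∑ j, εp j • ((∑ a, εn a • g (D (E a) (E a)) (Ee j))
            * (∑ b, εn b • g (D (E b) (E b)) (Ee j))))
        = ∑ j, ∑ a, ∑ b, (εn a * εp j * εn b) •
            (g (D (E a) (E a)) (Ee j) * g (D (E b) (E b)) (Ee j)) := by
          refine Finset.sum_congr rfl fun j _ => ?_
          rw [Finset.sum_mul_sum, Finset.smul_sum]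
          refine Finset.sum_congr rfl fun a _ => ?_
          rw [Finset.smul_sum]
          refine Finset.sum_congr rfl fun b _ => ?_
          rw [smul_mul_assoc, mul_smul_comm]
          module
      _ = _ := Finset.sum_comm
  have hgHtHt : g Ht Ht = ∑ a, ∑ i, ∑ j, (εn a * εp i * εp j) •
      (g (D (Ee i) (Ee i)) (E a) * g (D (Ee j) (Ee j)) (E a)) := by
    rw [parseval Ht Ht]
    simp only [gHtf, gHtE, zero_mul, smul_zero, Finset.sum_const_zero, add_zero]
    refine Finset.sum_congr rfl fun a _ => ?_
    rw [Finset.sum_mul_sum, Finset.smul_sum]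
    refine Finset.sum_congr rfl fun i _ => ?_
    rw [Finset.smul_sum]
    refine Finset.sum_congr rfl fun j _ => ?_
    rw [smul_mul_assoc, mul_smul_comm]
    module
  -- squared norms of h and T
  have hfval : ∀ a b, g (hf a b) (hf a b)
      = ∑ i, εp i • (((1/2:ℝ) • (g (D (E a) (E b)) (Ee i) + g (D (E b) (E a)) (Ee i)))
          * ((1/2:ℝ) • (g (D (E a) (E b)) (Ee i) + g (D (E b) (E a)) (Ee i)))) := by
    intro a b
    rw [hhf, innerF]
    refine Finset.sum_congr rfl fun i _ => ?_
    rw [g_rsmul_left, g_add_left]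
  have Tfval : ∀ a b, g (Tf a b) (Tf a b)
      = ∑ i, εp i • (((1/2:ℝ) • (g (D (E a) (E b)) (Ee i) - g (D (E b) (E a)) (Ee i)))
          * ((1/2:ℝ) • (g (D (E a) (E b)) (Ee i) - g (D (E b) (E a)) (Ee i)))) := by
    intro a b
    rw [hTf, innerF]
    refine Finset.sum_congr rfl fun i _ => ?_
    rw [← hD_torsionfree, g_rsmul_left, g_sub_left]
  have htfval : ∀ i j, g (htf i j) (htf i j)
      = ∑ a, εn a • (((1/2:ℝ) • (g (D (Ee i) (Ee j)) (E a) + g (D (Ee j) (Ee i)) (E a)))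
          * ((1/2:ℝ) • (g (D (Ee i) (Ee j)) (E a) + g (D (Ee j) (Ee i)) (E a)))) := by
    intro i j
    rw [hhtf, innerE]
    refine Finset.sum_congr rfl fun a _ => ?_
    rw [g_rsmul_left, g_add_left]
  have Ttfval : ∀ i j, g (Ttf i j) (Ttf i j)
      = ∑ a, εn a • (((1/2:ℝ) • (g (D (Ee i) (Ee j)) (E a) - g (D (Ee j) (Ee i)) (E a)))
          * ((1/2:ℝ) • (g (D (Ee i) (Ee j)) (E a) - g (D (Ee j) (Ee i)) (E a)))) := by
    intro i j
    rw [hTtf, innerE]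
    refine Finset.sum_congr rfl fun a _ => ?_
    rw [← hD_torsionfree, g_rsmul_left, g_sub_left]
  have hTmh : (∑ a, ∑ b, (εn a * εn b) • g (Tf a b) (Tf a b))
      - (∑ a, ∑ b, (εn a * εn b) • g (hf a b) (hf a b))
      = - ∑ a, ∑ i, ∑ b, (εn a * εp i * εn b) •
          (g (D (E a) (E b)) (Ee i) * g (D (E b) (E a)) (Ee i)) := by
    rw [← Finset.sum_sub_distrib]
    calc (∑ a, ((∑ b, (εn a * εn b) • g (Tf a b) (Tf a b))
            - ∑ b, (εn a * εn b) • g (hf a b) (hf a b)))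
        = ∑ a, ∑ b, ∑ i, (εn a * εn b * εp i) •
            (-(g (D (E a) (E b)) (Ee i) * g (D (E b) (E a)) (Ee i))) := by
          refine Finset.sum_congr rfl fun a _ => ?_
          rw [← Finset.sum_sub_distrib]
          refine Finset.sum_congr rfl fun b _ => ?_
          rw [Tfval, hfval, ← smul_sub, ← Finset.sum_sub_distrib, Finset.smul_sum]
          refine Finset.sum_congr rfl fun i _ => ?_
          rw [← smul_sub, quarter_diff, smul_smul]
      _ = ∑ a, ∑ i, ∑ b, (εn a * εp i * εn b) •
            (-(g (D (E a) (E b)) (Ee i) * g (D (E b) (E a)) (Ee i))) := by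
          refine Finset.sum_congr rfl fun a _ => ?_
          rw [Finset.sum_comm]
          refine Finset.sum_congr rfl fun i _ => Finset.sum_congr rfl fun b _ => ?_
          module
      _ = _ := by
          simp only [smul_neg, Finset.sum_neg_distrib]
  have hTmht : (∑ i, ∑ j, (εp i * εp j) • g (Ttf i j) (Ttf i j))
      - (∑ i, ∑ j, (εp i * εp j) • g (htf i j) (htf i j))
      = - ∑ a, ∑ i, ∑ j, (εn a * εp i * εp j) •
          (g (D (Ee i) (Ee j)) (E a) * g (D (Ee j) (Ee i)) (E a)) := by
    rw [← Finset.sum_sub_distrib]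
    calc (∑ i, ((∑ j, (εp i * εp j) • g (Ttf i j) (Ttf i j))
            - ∑ j, (εp i * εp j) • g (htf i j) (htf i j)))
        = ∑ i, ∑ j, ∑ a, (εp i * εp j * εn a) •
            (-(g (D (Ee i) (Ee j)) (E a) * g (D (Ee j) (Ee i)) (E a))) := by
          refine Finset.sum_congr rfl fun i _ => ?_
          rw [← Finset.sum_sub_distrib]
          refine Finset.sum_congr rfl fun j _ => ?_
          rw [Ttfval, htfval, ← smul_sub, ← Finset.sum_sub_distrib, Finset.smul_sum]
          refine Finset.sum_congr rfl fun a _ => ?_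
          rw [← smul_sub, quarter_diff, smul_smul]
      _ = ∑ i, ∑ a, ∑ j, (εp i * εp j * εn a) •
            (-(g (D (Ee i) (Ee j)) (E a) * g (D (Ee j) (Ee i)) (E a))) := by
          exact Finset.sum_congr rfl fun i _ => Finset.sum_comm
      _ = ∑ a, ∑ i, ∑ j, (εp i * εp j * εn a) •
            (-(g (D (Ee i) (Ee j)) (E a) * g (D (Ee j) (Ee i)) (E a))) := Finset.sum_comm
      _ = ∑ a, ∑ i, ∑ j, (εn a * εp i * εp j) •
            (-(g (D (Ee i) (Ee j)) (E a) * g (D (Ee j) (Ee i)) (E a))) := by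
          refine Finset.sum_congr rfl fun a _ => Finset.sum_congr rfl fun i _ =>
            Finset.sum_congr rfl fun j _ => ?_
          module
      _ = _ := by
          simp only [smul_neg, Finset.sum_neg_distrib]
  -- the four divergence pieces
  have hd1 : (∑ i, εp i • g (D (Ee i) H) (Ee i))
      = (∑ a, ∑ i, (εn a * εp i) • act (Ee i) (g (D (E a) (E a)) (Ee i)))
        - ∑ a, ∑ i, ∑ j, (εn a * εp i * εp j) •
            (g (D (E a) (E a)) (Ee j) * g (D (Ee i) (Ee i)) (Ee j)) := by
    have e1 : ∀ i, g (D (Ee i) H) (Ee i)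
        = ∑ a, εn a • (act (Ee i) (g (D (E a) (E a)) (Ee i))
            - ∑ j, εp j • (g (D (E a) (E a)) (Ee j) * g (D (Ee i) (Ee i)) (Ee j))) := by
      intro i
      rw [hH2, hDsum₂, g_sum_left]
      refine Finset.sum_congr rfl fun a _ => ?_
      rw [hDr₂, g_rsmul_left]
      congr 1
      rw [hDsum₂, g_sum_left]
      have inner : ∀ j, g (D (Ee i) (εp j • (g (D (E a) (E a)) (Ee j)) • Ee j)) (Ee i)
          = εp j • (act (Ee i) (g (D (E a) (E a)) (Ee j)) * g (Ee j) (Ee i))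
            - εp j • (g (D (E a) (E a)) (Ee j) * g (D (Ee i) (Ee i)) (Ee j)) := by
        intro j
        rw [hDr₂, g_rsmul_left, hD_fun₂, g_add_left, g_fsmul_left, g_fsmul_left,
          sFF (Ee i) j i, mul_neg, smul_add, smul_neg, ← sub_eq_add_neg]
      simp only [inner]
      rw [Finset.sum_sub_distrib,
        evalF (fun j => act (Ee i) (g (D (E a) (E a)) (Ee j))) i]
    simp only [e1]
    simp only [Finset.smul_sum, smul_sub, smul_smul, Finset.sum_sub_distrib]
    congr 1
    · rw [Finset.sum_comm]
      exact Finset.sum_congr rfl fun a _ => Finset.sum_congr rfl fun i _ => by module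
    · rw [Finset.sum_comm]
      exact Finset.sum_congr rfl fun a _ => Finset.sum_congr rfl fun i _ =>
        Finset.sum_congr rfl fun j _ => by module
  have hd2 : (∑ i, εp i • g (D (Ee i) Ht) (Ee i))
      = - ∑ a, ∑ i, ∑ j, (εn a * εp i * εp j) •
          (g (D (Ee i) (Ee i)) (E a) * g (D (Ee j) (Ee j)) (E a)) := by
    have e1 : ∀ i, g (D (Ee i) Ht) (Ee i)
        = ∑ j, εp j • (- ∑ b, εn b •
            (g (D (Ee j) (Ee j)) (E b) * g (D (Ee i) (Ee i)) (E b))) := by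
      intro i
      rw [hHt2, hDsum₂, g_sum_left]
      refine Finset.sum_congr rfl fun j _ => ?_
      rw [hDr₂, g_rsmul_left]
      congr 1
      rw [hDsum₂, g_sum_left]
      have inner : ∀ b, g (D (Ee i) (εn b • (g (D (Ee j) (Ee j)) (E b)) • E b)) (Ee i)
          = - (εn b • (g (D (Ee j) (Ee j)) (E b) * g (D (Ee i) (Ee i)) (E b))) := by
        intro b
        rw [hDr₂, g_rsmul_left, hD_fun₂, g_add_left, g_fsmul_left, g_fsmul_left,
          hmix, sEF (Ee i) b i, mul_zero, zero_add, mul_neg, smul_neg]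
      simp only [inner]
      rw [Finset.sum_neg_distrib]
    simp only [e1]
    simp only [Finset.smul_sum, smul_neg, smul_smul, Finset.sum_neg_distrib]
    rw [neg_inj]
    calc (∑ i, ∑ j, ∑ b, (εp i * (εp j * εn b)) •
            (g (D (Ee j) (Ee j)) (E b) * g (D (Ee i) (Ee i)) (E b)))
        = ∑ i, ∑ b, ∑ j, (εp i * (εp j * εn b)) •
            (g (D (Ee j) (Ee j)) (E b) * g (D (Ee i) (Ee i)) (E b)) :=
          Finset.sum_congr rfl fun i _ => Finset.sum_comm
      _ = ∑ b, ∑ i, ∑ j, (εp i * (εp j * εn b)) •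
            (g (D (Ee j) (Ee j)) (E b) * g (D (Ee i) (Ee i)) (E b)) := Finset.sum_comm
      _ = _ := by
          refine Finset.sum_congr rfl fun a _ => Finset.sum_congr rfl fun i _ =>
            Finset.sum_congr rfl fun j _ => ?_
          rw [mul_comm (g (D (Ee j) (Ee j)) (E a)) (g (D (Ee i) (Ee i)) (E a))]
          module
  have hd3 : (∑ a, εn a • g (D (E a) H) (E a))
      = - ∑ a, ∑ i, ∑ b, (εn a * εp i * εn b) •
          (g (D (E a) (E a)) (Ee i) * g (D (E b) (E b)) (Ee i)) := by
    have e1 : ∀ a, g (D (E a) H) (E a)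
        = ∑ b, εn b • (- ∑ j, εp j •
            (g (D (E b) (E b)) (Ee j) * g (D (E a) (E a)) (Ee j))) := by
      intro a
      rw [hH2, hDsum₂, g_sum_left]
      refine Finset.sum_congr rfl fun b _ => ?_
      rw [hDr₂, g_rsmul_left]
      congr 1
      rw [hDsum₂, g_sum_left]
      have inner : ∀ j, g (D (E a) (εp j • (g (D (E b) (E b)) (Ee j)) • Ee j)) (E a)
          = - (εp j • (g (D (E b) (E b)) (Ee j) * g (D (E a) (E a)) (Ee j))) := by
        intro j
        have sFE : g (D (E a) (Ee j)) (E a) = - g (D (E a) (E a)) (Ee j) := by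
          rw [sEF (E a) a j, neg_neg]
        rw [hDr₂, g_rsmul_left, hD_fun₂, g_add_left, g_fsmul_left, g_fsmul_left,
          hmix', sFE, mul_zero, zero_add, mul_neg, smul_neg]
      simp only [inner]
      rw [Finset.sum_neg_distrib]
    simp only [e1]
    simp only [Finset.smul_sum, smul_neg, smul_smul, Finset.sum_neg_distrib]
    rw [neg_inj]
    refine Finset.sum_congr rfl fun a _ => ?_
    rw [Finset.sum_comm]
    refine Finset.sum_congr rfl fun i _ => Finset.sum_congr rfl fun b _ => ?_
    rw [mul_comm (g (D (E b) (E b)) (Ee i)) (g (D (E a) (E a)) (Ee i))]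
    module
  have hd4 : (∑ a, εn a • g (D (E a) Ht) (E a))
      = (∑ a, ∑ i, (εn a * εp i) • act (E a) (g (D (Ee i) (Ee i)) (E a)))
        - ∑ a, ∑ i, ∑ b, (εn a * εp i * εn b) •
            (g (D (E a) (E a)) (E b) * g (D (Ee i) (Ee i)) (E b)) := by
    have e1 : ∀ a, g (D (E a) Ht) (E a)
        = ∑ i, εp i • (act (E a) (g (D (Ee i) (Ee i)) (E a))
            - ∑ b, εn b • (g (D (Ee i) (Ee i)) (E b) * g (D (E a) (E a)) (E b))) := by
      intro a
      rw [hHt2, hDsum₂, g_sum_left]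
      refine Finset.sum_congr rfl fun i _ => ?_
      rw [hDr₂, g_rsmul_left]
      congr 1
      rw [hDsum₂, g_sum_left]
      have inner : ∀ b, g (D (E a) (εn b • (g (D (Ee i) (Ee i)) (E b)) • E b)) (E a)
          = εn b • (act (E a) (g (D (Ee i) (Ee i)) (E b)) * g (E b) (E a))
            - εn b • (g (D (Ee i) (Ee i)) (E b) * g (D (E a) (E a)) (E b)) := by
        intro b
        have sEE' : g (D (E a) (E b)) (E a) = - g (D (E a) (E a)) (E b) := sEE (E a) b a
        rw [hDr₂, g_rsmul_left, hD_fun₂, g_add_left, g_fsmul_left, g_fsmul_left,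
          sEE', mul_neg, smul_add, smul_neg, ← sub_eq_add_neg]
      simp only [inner]
      rw [Finset.sum_sub_distrib,
        evalE (fun b => act (E a) (g (D (Ee i) (Ee i)) (E b))) a]
    simp only [e1]
    simp only [Finset.smul_sum, smul_sub, smul_smul, Finset.sum_sub_distrib]
    congr 1
    refine Finset.sum_congr rfl fun a _ => Finset.sum_congr rfl fun i _ =>
      Finset.sum_congr rfl fun b _ => ?_
    rw [mul_comm (g (D (Ee i) (Ee i)) (E b)) (g (D (E a) (E a)) (E b))]
    module
  have hsplit1 : (∑ i, εp i • g (D (Ee i) (H + Ht)) (Ee i))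
      = (∑ i, εp i • g (D (Ee i) H) (Ee i)) + (∑ i, εp i • g (D (Ee i) Ht) (Ee i)) := by
    rw [← Finset.sum_add_distrib]
    refine Finset.sum_congr rfl fun i _ => ?_
    rw [hD_add₂, g_add_left, smul_add]
  have hsplit2 : (∑ a, εn a • g (D (E a) (H + Ht)) (E a))
      = (∑ a, εn a • g (D (E a) H) (E a)) + (∑ a, εn a • g (D (E a) Ht) (E a)) := by
    rw [← Finset.sum_add_distrib]
    refine Finset.sum_congr rfl fun a _ => ?_
    rw [hD_add₂, g_add_left, smul_add]
  -- the two skew sums vanish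
  have hY2 : (∑ a, ∑ i, ∑ b, (εn a * εp i * εn b) •
        (g (D (Ee i) (E a)) (E b) * g (D (E a) (E b)) (Ee i)))
      + (∑ a, ∑ i, ∑ b, (εn a * εp i * εn b) •
        (g (D (Ee i) (E a)) (E b) * g (D (E b) (E a)) (Ee i))) = 0 := by
    have hsk : ∀ (a : Fin n) (i : Fin p) (b : Fin n),
        ((εn a * εp i * εn b) • (g (D (Ee i) (E a)) (E b) * g (D (E a) (E b)) (Ee i))
          + (εn a * εp i * εn b) • (g (D (Ee i) (E a)) (E b) * g (D (E b) (E a)) (Ee i)))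
        = - ((εn b * εp i * εn a) • (g (D (Ee i) (E b)) (E a) * g (D (E b) (E a)) (Ee i))
          + (εn b * εp i * εn a) • (g (D (Ee i) (E b)) (E a) * g (D (E a) (E b)) (Ee i))) := by
      intro a i b
      rw [sEE (Ee i) a b]
      simp only [neg_mul, smul_neg]
      module
    calc (∑ a, ∑ i, ∑ b, (εn a * εp i * εn b) •
            (g (D (Ee i) (E a)) (E b) * g (D (E a) (E b)) (Ee i)))
          + (∑ a, ∑ i, ∑ b, (εn a * εp i * εn b) •
            (g (D (Ee i) (E a)) (E b) * g (D (E b) (E a)) (Ee i)))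
        = ∑ a, ∑ i, ∑ b, ((εn a * εp i * εn b) •
            (g (D (Ee i) (E a)) (E b) * g (D (E a) (E b)) (Ee i))
          + (εn a * εp i * εn b) •
            (g (D (Ee i) (E a)) (E b) * g (D (E b) (E a)) (Ee i))) := by
          simp only [← Finset.sum_add_distrib]
      _ = 0 := skew_sum_zero _ hsk
  have hZ2 : (∑ a, ∑ i, ∑ j, (εn a * εp i * εp j) •
        (g (D (E a) (Ee i)) (Ee j) * g (D (Ee i) (Ee j)) (E a)))
      + (∑ a, ∑ i, ∑ j, (εn a * εp i * εp j) •
        (g (D (E a) (Ee i)) (Ee j) * g (D (Ee j) (Ee i)) (E a))) = 0 := by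
    rw [← Finset.sum_add_distrib]
    refine Finset.sum_eq_zero fun a _ => ?_
    have hsk : ∀ (i j : Fin p),
        ((εn a * εp i * εp j) • (g (D (E a) (Ee i)) (Ee j) * g (D (Ee i) (Ee j)) (E a))
          + (εn a * εp i * εp j) • (g (D (E a) (Ee i)) (Ee j) * g (D (Ee j) (Ee i)) (E a)))
        = - ((εn a * εp j * εp i) • (g (D (E a) (Ee j)) (Ee i) * g (D (Ee j) (Ee i)) (E a))
          + (εn a * εp j * εp i) • (g (D (E a) (Ee j)) (Ee i) * g (D (Ee i) (Ee j)) (E a))) := by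
      intro i j
      rw [sFF (E a) i j]
      simp only [neg_mul, smul_neg]
      module
    calc ((∑ i, ∑ j, (εn a * εp i * εp j) •
            (g (D (E a) (Ee i)) (Ee j) * g (D (Ee i) (Ee j)) (E a)))
          + ∑ i, ∑ j, (εn a * εp i * εp j) •
            (g (D (E a) (Ee i)) (Ee j) * g (D (Ee j) (Ee i)) (E a)))
        = ∑ i, ∑ j, ((εn a * εp i * εp j) •
            (g (D (E a) (Ee i)) (Ee j) * g (D (Ee i) (Ee j)) (E a))
          + (εn a * εp i * εp j) •
            (g (D (E a) (Ee i)) (Ee j) * g (D (Ee j) (Ee i)) (E a))) := by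
          simp only [← Finset.sum_add_distrib]
      _ = 0 := skew_sum_zero₂ _ hsk
  -- assemble the left-hand side
  rw [hSmix]
  have hLHS : (∑ a, ∑ i, (εn a * εp i) •
      g (D (Ee i) (D (E a) (E a)) - D (E a) (D (Ee i) (E a)) + D (br (E a) (Ee i)) (E a))
        (Ee i))
      = (∑ a, ∑ i, (εn a * εp i) • act (Ee i) (g (D (E a) (E a)) (Ee i)))
        + (∑ a, ∑ i, (εn a * εp i) • act (E a) (g (D (Ee i) (Ee i)) (E a)))
        - (∑ a, ∑ i, ∑ b, (εn a * εp i * εn b) •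
            (g (D (E a) (E a)) (E b) * g (D (Ee i) (Ee i)) (E b)))
        - (∑ a, ∑ i, ∑ b, (εn a * εp i * εn b) •
            (g (D (Ee i) (E a)) (E b) * g (D (E a) (E b)) (Ee i)))
        - (∑ a, ∑ i, ∑ b, (εn a * εp i * εn b) •
            (g (D (Ee i) (E a)) (E b) * g (D (E b) (E a)) (Ee i)))
        - (∑ a, ∑ i, ∑ b, (εn a * εp i * εn b) •
            (g (D (E a) (E b)) (Ee i) * g (D (E b) (E a)) (Ee i)))
        - (∑ a, ∑ i, ∑ j, (εn a * εp i * εp j) •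
            (g (D (E a) (E a)) (Ee j) * g (D (Ee i) (Ee i)) (Ee j)))
        - (∑ a, ∑ i, ∑ j, (εn a * εp i * εp j) •
            (g (D (E a) (Ee i)) (Ee j) * g (D (Ee i) (Ee j)) (E a)))
        - (∑ a, ∑ i, ∑ j, (εn a * εp i * εp j) •
            (g (D (E a) (Ee i)) (Ee j) * g (D (Ee j) (Ee i)) (E a)))
        - (∑ a, ∑ i, ∑ j, (εn a * εp i * εp j) •
            (g (D (Ee i) (Ee j)) (E a) * g (D (Ee j) (Ee i)) (E a))) := by
    refine Eq.trans (Finset.sum_congr rfl fun a _ => Finset.sum_congr rfl fun i _ =>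
      congrArg (fun z => (εn a * εp i) • z) (key a i)) ?_
    simp only [smul_add, smul_sub, Finset.smul_sum, smul_smul, Finset.sum_add_distrib,
      Finset.sum_sub_distrib]
  linear_combination hLHS - hgHH - hgHtHt - hTmh - hTmht - hsplit1 - hsplit2
    - hd1 - hd2 - hd3 - hd4 - hY2 - hZ2
end

section
/- Let (M,g) be pseudo-Riemannian with orthogonal non-degenerate distributions 𝔇̃ (rank n) and 𝔇 (rank p ≥ 1), and 𝔗 the contorsion of a semi-symmetric connection given by U. In vacuum (spin tensor s = 0), the connection ∇ + 𝔗 is critical for the total mixed scalar curvature action with fixed g, among semi-symmetric connections, if and only if 2p(n−1)U^⊤ = (n−p)H̃ and 2n(p−1)U^⊥ = (p−n)H. -/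
/-- In vacuum (spin tensor `s = 0`), the semi-symmetric connection
determined by the vector field `U` on `(M, g, 𝔇̃, 𝔇)` (ranks `n`, `p ≥ 1`) is critical
for the total mixed scalar curvature action with fixed `g`, among semi-symmetric
connections, iff `2p(n−1)U^⊤ = (n−p)H̃` and `2n(p−1)U^⊥ = (p−n)H`.
Criticality means the vanishing of the first variation of `∫ Q d vol_g` for all compactly
supported variations of `U`, where
`Q = (n−p)⟨U, H−H̃⟩ + np⟨U,U⟩ − n⟨U^⊥,U^⊥⟩ − p⟨U^⊤,U^⊤⟩`;
`I` denotes the integral over `M`, and the fundamental-lemma hypothesis `hfund`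
expresses the non-degeneracy of the pairing `(W,Z) ↦ ∫⟨W,Z⟩`. -/
theorem semisymmetric_critical_iff
    {F V : Type*} [AddCommGroup F] [Module ℝ F]
    [AddCommGroup V] [Module ℝ V]
    (g : V →ₗ[ℝ] V →ₗ[ℝ] F)
    (hgsymm : ∀ X Y : V, g X Y = g Y X)
    (Ptop Pperp : V →ₗ[ℝ] V)             -- orthogonal projections onto 𝔇̃ and 𝔇
    (hsum : ∀ X : V, Ptop X + Pperp X = X)
    (hidem_top : ∀ X : V, Ptop (Ptop X) = Ptop X)
    (hidem_perp : ∀ X : V, Pperp (Pperp X) = Pperp X)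
    (hadj_top : ∀ X Y : V, g (Ptop X) Y = g X (Ptop Y))
    (hadj_perp : ∀ X Y : V, g (Pperp X) Y = g X (Pperp Y))
    {n p : ℕ} (hn : 1 ≤ n) (hp : 1 ≤ p)
    (H Ht : V)                            -- mean curvature vectors of 𝔇̃ and 𝔇
    (hHperp : Pperp H = H) (hHttop : Ptop Ht = Ht)
    (U : V)
    (I : F →ₗ[ℝ] ℝ)                       -- the integral over M
    (hfund : ∀ Z : V, (∀ W : V, I (g W Z) = 0) → Z = 0) :
    -- the first variation of ∫ Q vanishes for all variations U̇ of U ...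
    (∀ Udot : V,
        I (((n : ℝ) - (p : ℝ)) • g Udot (H - Ht) + (2 * (n : ℝ) * (p : ℝ)) • g U Udot
            - (2 * (n : ℝ)) • g (Pperp U) (Pperp Udot)
            - (2 * (p : ℝ)) • g (Ptop U) (Ptop Udot)) = 0)
      -- ... iff  2p(n−1)U^⊤ = (n−p)H̃  and  2n(p−1)U^⊥ = (p−n)H
      ↔ ((2 * (p : ℝ) * ((n : ℝ) - 1)) • Ptop U = ((n : ℝ) - (p : ℝ)) • Ht
          ∧ (2 * (n : ℝ) * ((p : ℝ) - 1)) • Pperp U = ((p : ℝ) - (n : ℝ)) • H) := by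

  -- auxiliary facts
  have hPtopH : Ptop H = 0 := by
    have := hsum H; rw [hHperp] at this; linear_combination (norm := module) this
  have hPperpHt : Pperp Ht = 0 := by
    have := hsum Ht; rw [hHttop] at this; linear_combination (norm := module) this
  have hmix : ∀ X : V, Ptop (Pperp X) = 0 := by
    intro X
    have h1 : Ptop (Ptop X + Pperp X) = Ptop X := by rw [hsum]
    rw [map_add, hidem_top] at h1
    linear_combination (norm := module) h1
  have hmix' : ∀ X : V, Pperp (Ptop X) = 0 := by
    intro X
    have h1 : Pperp (Ptop X + Pperp X) = Pperp X := by rw [hsum]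
    rw [map_add, hidem_perp] at h1
    linear_combination (norm := module) h1
  set Z : V := ((n : ℝ) - p) • (H - Ht) + (2 * (p : ℝ) * ((n : ℝ) - 1)) • Ptop U
      + (2 * (n : ℝ) * ((p : ℝ) - 1)) • Pperp U with hZdef
  have key : ∀ Udot : V,
      ((n : ℝ) - (p : ℝ)) • g Udot (H - Ht) + (2 * (n : ℝ) * (p : ℝ)) • g U Udot
        - (2 * (n : ℝ)) • g (Pperp U) (Pperp Udot)
        - (2 * (p : ℝ)) • g (Ptop U) (Ptop Udot) = g Udot Z := by
    intro Udot
    have e1 : g (Pperp U) (Pperp Udot) = g Udot (Pperp U) := by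
      rw [← hadj_perp, hidem_perp, hgsymm]
    have e2 : g (Ptop U) (Ptop Udot) = g Udot (Ptop U) := by
      rw [← hadj_top, hidem_top, hgsymm]
    have e3 : g U Udot = g Udot (Ptop U) + g Udot (Pperp U) := by
      rw [← map_add, hsum, hgsymm]
    rw [e1, e2, e3, hZdef]
    simp only [map_add, map_smul, smul_add]
    module
  constructor
  · intro h
    have hZ0 : Z = 0 := by
      apply hfund
      intro W
      rw [← key W]
      exact h W
    constructor
    · have h1 : Ptop Z = 0 := by rw [hZ0, map_zero]
      rw [hZdef] at h1
      simp only [map_add, map_smul, map_sub, hPtopH, hHttop, hidem_top, hmix] at h1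
      linear_combination (norm := module) h1
    · have h1 : Pperp Z = 0 := by rw [hZ0, map_zero]
      rw [hZdef] at h1
      simp only [map_add, map_smul, map_sub, hPperpHt, hHperp, hidem_perp, hmix'] at h1
      linear_combination (norm := module) h1
  · rintro ⟨h1, h2⟩
    intro Udot
    have hZ0 : Z = 0 := by
      rw [hZdef, h1, h2]
      module
    rw [key, hZ0, map_zero, map_zero]
end
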